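/- If a rational matrix R is the sum R1 + R2 of two rational matrices whose first determinantal denominators φ_1(R1) and φ_1(R2) are coprime polynomials, then φ_ℓ(R) = φ_ℓ(R1)·φ_ℓ(R2) for all ℓ. -/

import Mathlib

open Polynomial

noncomputable section

/-- Normalization on a field: every nonzero element normalizes to `1`. -/
noncomputable def fieldNormalizationMonoid (K : Type*) [Field K] : NormalizationMonoid K := by
  classical
  exact
  { normUnit := fun a => if h : a = 0 then 1 else (Units.mk0 a h)⁻¹
    normUnit_zero := dif_pos rfl
    normUnit_one := by
      rw [dif_neg one_ne_zero]
      exact Units.ext (by simp)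
    normUnit_mul_units := fun {a} u ha => by
      rw [dif_neg (mul_ne_zero ha u.ne_zero), dif_neg ha]
      exact Units.ext (by simp [mul_comm]) }

attribute [local instance] fieldNormalizationMonoid

noncomputable local instance (K : Type*) [Field K] : NormalizedGCDMonoid (Polynomial K) :=
  UniqueFactorizationMonoid.toNormalizedGCDMonoid _

variable {k : Type*} [Field k] [CharZero k]

/-- The ℓ-th determinantal denominator of a rational matrix: the monic least common
denominator of all minors of size at most ℓ. -/
def detDen {n p : ℕ} (R : Matrix (Fin n) (Fin p) (RatFunc k)) (ℓ : ℕ) : Polynomial k :=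
  (Finset.range (ℓ + 1)).lcm fun i =>
    (Finset.univ : Finset ((Fin i ↪ Fin n) × (Fin i ↪ Fin p))).lcm fun fg =>
      (Matrix.det fun a b => R (fg.1 a) (fg.2 b)).denom

/-!
The key estimate is `φ_ℓ(A + B) ∣ φ_ℓ(A) * e ^ ℓ` whenever every entry of `B` has denominator
dividing `e`. Split the columns of a minor of `A + B` one at a time into their `A`- and `B`-parts
by multilinearity, and Laplace-expand along every column taken from `B`: this writes the minor as
a sum of products of a minor of `A` with at most `ℓ` entries of `B`. The bookkeeping is done in
the `k[X]`-submodules `k[X] • q⁻¹` of `k(X)` (the rational functions with denominator dividing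
`q`), which multiply like the `q⁻¹`.

Applied to `R = R1 + R2`, `R1 = R - R2`, `R2 = R - R1` and `R_i = 0 + R_i`, the estimate bounds
`φ_ℓ(R)` above and below by `φ_ℓ(R1) φ_ℓ(R2)` up to the factors `φ_1(R1) ^ ℓ` and `φ_1(R2) ^ ℓ`,
and `φ_ℓ(R_i) ∣ φ_1(R_i) ^ ℓ`; coprimality of these powers removes the extra factors.
-/

theorem IsCoprime.dvd_mul_of_dvd_mul_of_dvd_mul {R : Type*} [CommRing R] {a b c e₁ e₂ : R}
    (h : IsCoprime e₁ e₂) (h₁ : c ∣ a * e₂) (h₂ : c ∣ b * e₁) : c ∣ a * b := by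
  obtain ⟨u, v, huv⟩ := h
  have hab : a * b = u * a * (b * e₁) + v * b * (a * e₂) := by linear_combination (-(a * b)) * huv
  rw [hab]
  exact dvd_add (dvd_mul_of_dvd_right h₂ _) (dvd_mul_of_dvd_right h₁ _)

theorem IsCoprime.mul_dvd_of_dvd_mul_of_dvd_mul {R : Type*} [CommRing R] {a b c e₁ e₂ : R}
    (h : IsCoprime e₁ e₂) (ha : a ∣ e₁) (hb : b ∣ e₂) (h₁ : a ∣ c * e₂) (h₂ : b ∣ c * e₁) :
    a * b ∣ c := by
  have ha' : IsCoprime a e₂ := h.of_isCoprime_of_dvd_left ha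
  have hb' : IsCoprime b e₁ := h.symm.of_isCoprime_of_dvd_left hb
  exact (ha'.of_isCoprime_of_dvd_right hb).mul_dvd (ha'.dvd_of_dvd_mul_right h₁)
    (hb'.dvd_of_dvd_mul_right h₂)

namespace Matrix

variable {R A : Type*} [CommRing R] [CommRing A] [Algebra R A]

theorem det_mem_mul_of_col_mem {m : ℕ} {J K : Submodule R A}
    (M : Matrix (Fin (m + 1)) (Fin (m + 1)) A) (j : Fin (m + 1)) (hcol : ∀ r, M r j ∈ J)
    (hminor : ∀ r : Fin (m + 1), (M.submatrix r.succAbove j.succAbove).det ∈ K) :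
    M.det ∈ J * K := by
  rw [det_succ_column M j]
  refine Submodule.sum_mem _ fun (r : Fin (m + 1)) _ => ?_
  have hsign : ∀ x : A, (-1) ^ ((r : ℕ) + j) * x = ((-1 : R) ^ ((r : ℕ) + j)) • x := by
    simp [Algebra.smul_def]
  rw [mul_assoc, hsign]
  exact Submodule.smul_mem _ _ (Submodule.mul_mem_mul (hcol r) (hminor r))

theorem det_add_mem_mul_pow {I J : Submodule R A} (hJ : (1 : A) ∈ J) :
    ∀ {m : ℕ} (U W : Matrix (Fin m) (Fin m) A),
      (∀ i (f g : Fin i ↪ Fin m), (U.submatrix f g).det ∈ I) → (∀ r c, W r c ∈ J) →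
      (U + W).det ∈ I * J ^ m := by
  intro m
  induction m with
  | zero =>
    intro U W hU _
    simpa [det_isEmpty] using hU 0 (Function.Embedding.refl _) (Function.Embedding.refl _)
  | succ m ih =>
    intro U W hU hW
    suffices ∀ S : Finset (Fin (m + 1)), ∀ W : Matrix _ _ A, (∀ r c, W r c ∈ J) →
        (∀ r, ∀ c ∉ S, W r c = 0) → (U + W).det ∈ I * J ^ (m + 1) from
      this Finset.univ W hW (by simp)
    intro S
    induction S using Finset.induction_on with
    | empty =>
      intro W _ hW0
      obtain rfl : W = 0 := ext fun r c => hW0 r c (Finset.notMem_empty c)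
      have hIJ : I ≤ I * J ^ (m + 1) :=
        le_mul_of_one_le_right' (one_le_pow_of_one_le' (Submodule.one_le.mpr hJ) _)
      simpa [Function.Embedding.coe_refl] using
        hIJ (hU _ (Function.Embedding.refl _) (Function.Embedding.refl _))
    | insert j S hj ihS =>
      intro W hW hW0
      set W' := W.updateCol j 0
      have hW' : ∀ r c, W' r c ∈ J := by
        intro r c; by_cases h : c = j <;> simp [W', h, hW]
      have h1 : U + W = (U + W').updateCol j ((fun r => U r j) + fun r => W r j) := by
        ext r c; by_cases h : c = j <;> simp [W', h]
      have h2 : U + W' = (U + W').updateCol j (fun r => U r j) := by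
        ext r c; by_cases h : c = j <;> simp [W', h]
      rw [h1, det_updateCol_add, ← h2]
      refine add_mem (ihS W' hW' ?_) ?_
      · intro r c hc
        by_cases h : c = j
        · simp [W', h]
        · simpa [W', h] using hW0 r c (by simp [h, hc])
      · rw [pow_succ', mul_left_comm]
        refine det_mem_mul_of_col_mem _ j (fun r => by simpa using hW r j) fun r => ?_
        rw [submatrix_updateCol_succAbove, submatrix_add]
        refine ih _ _ (fun i f g => ?_) fun r c => hW' _ _
        rw [submatrix_submatrix]
        exact hU i (f.trans r.succAboveEmb) (g.trans j.succAboveEmb)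

end Matrix

theorem Submodule.span_singleton_mul_pow {R A : Type*} [CommSemiring R] [CommSemiring A]
    [Algebra R A] (a b : A) (n : ℕ) :
    span R {a} * span R {b} ^ n = span R {a * b ^ n} := by
  rw [span_pow, span_mul_span, Set.singleton_pow, Set.singleton_mul_singleton]

theorem RatFunc.denom_dvd_iff_mem_span {K : Type*} [Field K] {x : RatFunc K} {q : K[X]}
    (hq : q ≠ 0) :
    x.denom ∣ q ↔ x ∈ Submodule.span K[X] {(algebraMap K[X] (RatFunc K) q)⁻¹} := by
  rw [RatFunc.denom_dvd hq, Submodule.mem_span_singleton]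
  simp [Algebra.smul_def, div_eq_mul_inv, eq_comm]

section detDen

variable {K : Type*} [Field K] {n p : ℕ}

theorem detDen_dvd_iff {R : Matrix (Fin n) (Fin p) (RatFunc K)} {ℓ : ℕ} {q : K[X]} :
    detDen R ℓ ∣ q ↔
      ∀ i ≤ ℓ, ∀ (f : Fin i ↪ Fin n) (g : Fin i ↪ Fin p), (R.submatrix f g).det.denom ∣ q := by
  simp only [detDen, Finset.lcm_dvd_iff, Finset.mem_range, Nat.lt_succ_iff, Finset.mem_univ,
    true_implies, Prod.forall]
  rfl

theorem denom_det_submatrix_dvd_detDen (R : Matrix (Fin n) (Fin p) (RatFunc K)) {i ℓ : ℕ}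
    (hi : i ≤ ℓ) (f : Fin i ↪ Fin n) (g : Fin i ↪ Fin p) :
    (R.submatrix f g).det.denom ∣ detDen R ℓ :=
  detDen_dvd_iff.mp dvd_rfl i hi f g

theorem denom_dvd_detDen_one (R : Matrix (Fin n) (Fin p) (RatFunc K)) (r : Fin n) (c : Fin p) :
    (R r c).denom ∣ detDen R 1 := by
  have h := denom_det_submatrix_dvd_detDen R (le_refl 1)
    (Function.Embedding.oneEmbeddingEquiv.symm r) (Function.Embedding.oneEmbeddingEquiv.symm c)
  rwa [Matrix.det_unique] at h

theorem detDen_ne_zero (R : Matrix (Fin n) (Fin p) (RatFunc K)) (ℓ : ℕ) : detDen R ℓ ≠ 0 := by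
  simp [detDen, Finset.lcm_eq_zero_iff, RatFunc.denom_ne_zero]

theorem monic_detDen (R : Matrix (Fin n) (Fin p) (RatFunc K)) (ℓ : ℕ) : (detDen R ℓ).Monic := by
  classical exact (normalize_eq_self_iff_monic (detDen_ne_zero R ℓ)).mp Finset.normalize_lcm

theorem detDen_zero (ℓ : ℕ) : detDen (0 : Matrix (Fin n) (Fin p) (RatFunc K)) ℓ = 1 := by
  have h : detDen (0 : Matrix (Fin n) (Fin p) (RatFunc K)) ℓ ∣ 1 := by
    refine detDen_dvd_iff.mpr fun i _ f g => ?_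
    cases i with
    | zero => simp [Matrix.det_isEmpty]
    | succ i => simp
  exact (monic_detDen _ ℓ).eq_one_of_isUnit (isUnit_of_dvd_one h)

theorem detDen_add_dvd_of_denom_dvd (A B : Matrix (Fin n) (Fin p) (RatFunc K)) (ℓ : ℕ)
    {e : K[X]} (he : e ≠ 0) (hB : ∀ r c, (B r c).denom ∣ e) :
    detDen (A + B) ℓ ∣ detDen A ℓ * e ^ ℓ := by
  refine detDen_dvd_iff.mpr fun i hi f g => ?_
  have hd := detDen_ne_zero A ℓ
  refine dvd_trans ?_ (mul_dvd_mul_left _ (pow_dvd_pow e hi))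
  rw [RatFunc.denom_dvd_iff_mem_span (mul_ne_zero hd (pow_ne_zero _ he)), map_mul, map_pow,
    mul_inv, ← inv_pow, ← Submodule.span_singleton_mul_pow, Matrix.submatrix_add]
  refine Matrix.det_add_mem_mul_pow ?_ _ _ (fun i' f' g' => ?_) fun r c => ?_
  · exact Submodule.mem_span_singleton.mpr ⟨e, by simp [Algebra.smul_def, he]⟩
  · have hi' : i' ≤ i := by simpa using Fintype.card_le_of_embedding f'
    rw [Matrix.submatrix_submatrix, ← RatFunc.denom_dvd_iff_mem_span hd]
    exact denom_det_submatrix_dvd_detDen A (hi'.trans hi) (f'.trans f) (g'.trans g)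
  · exact (RatFunc.denom_dvd_iff_mem_span he).mp (hB _ _)

theorem detDen_add_dvd (A B : Matrix (Fin n) (Fin p) (RatFunc K)) (ℓ : ℕ) :
    detDen (A + B) ℓ ∣ detDen A ℓ * detDen B 1 ^ ℓ :=
  detDen_add_dvd_of_denom_dvd A B ℓ (detDen_ne_zero B 1) (denom_dvd_detDen_one B)

theorem detDen_sub_dvd (A B : Matrix (Fin n) (Fin p) (RatFunc K)) (ℓ : ℕ) :
    detDen (A - B) ℓ ∣ detDen A ℓ * detDen B 1 ^ ℓ := by
  have he := detDen_ne_zero B 1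
  rw [sub_eq_add_neg]
  refine detDen_add_dvd_of_denom_dvd A (-B) ℓ he fun r c => ?_
  rw [RatFunc.denom_dvd_iff_mem_span he, Matrix.neg_apply, neg_mem_iff,
    ← RatFunc.denom_dvd_iff_mem_span he]
  exact denom_dvd_detDen_one B r c

theorem detDen_dvd_detDen_one_pow (A : Matrix (Fin n) (Fin p) (RatFunc K)) (ℓ : ℕ) :
    detDen A ℓ ∣ detDen A 1 ^ ℓ := by
  simpa [detDen_zero] using detDen_add_dvd 0 A ℓ

end detDen

/-- If `R = R1 + R2` and the first determinantal denominators `φ_1(R1)`, `φ_1(R2)` are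
coprime, then `φ_ℓ(R) = φ_ℓ(R1) * φ_ℓ(R2)` for all `ℓ`. -/
theorem detDen_add_eq_of_coprime {n p : ℕ} (R R1 R2 : Matrix (Fin n) (Fin p) (RatFunc k))
    (hR : R = R1 + R2) (hcop : IsCoprime (detDen R1 1) (detDen R2 1)) (ℓ : ℕ) :
    detDen R ℓ = detDen R1 ℓ * detDen R2 ℓ := by
  subst hR
  have hcopℓ := hcop.pow (m := ℓ) (n := ℓ)
  refine eq_of_monic_of_associated (monic_detDen _ ℓ)
    ((monic_detDen R1 ℓ).mul (monic_detDen R2 ℓ)) (associated_of_dvd_dvd ?_ ?_)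
  · refine hcopℓ.dvd_mul_of_dvd_mul_of_dvd_mul (detDen_add_dvd R1 R2 ℓ) ?_
    simpa only [add_comm] using detDen_add_dvd R2 R1 ℓ
  · refine hcopℓ.mul_dvd_of_dvd_mul_of_dvd_mul (detDen_dvd_detDen_one_pow R1 ℓ)
      (detDen_dvd_detDen_one_pow R2 ℓ) ?_ ?_
    · simpa using detDen_sub_dvd (R1 + R2) R2 ℓ
    · simpa using detDen_sub_dvd (R1 + R2) R1 ℓ

end
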